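/- For the Schubert derivation on ⋀^k M and any i ≥ 1, h ≥ 0: D_h(ε^i ∧ ε^{i+1} ∧ ⋯ ∧ ε^{i+k-2} ∧ ε^{i+k-1}) = ε^i ∧ ε^{i+1} ∧ ⋯ ∧ ε^{i+k-2} ∧ ε^{i+k-1+h}. -/

import Mathlib

open scoped Classical

noncomputable section

/-- The free ℤ-module `M = ⊕_{i ≥ 1} ℤ ε^i`; the basis vector `ε^i` (i ≥ 1) is
`Finsupp.single (i-1) 1`. -/
abbrev Mmod : Type := ℕ →₀ ℤ

def ee (i : ℕ) : Mmod := Finsupp.single (i - 1) 1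

/-- The exterior algebra `⋀ M` over ℤ. -/
abbrev EA : Type := ExteriorAlgebra ℤ Mmod

def eps (i : ℕ) : EA := ExteriorAlgebra.ι ℤ (ee i)

/-- `ε^{i₁} ∧ ⋯ ∧ ε^{i_k}`. -/
def wedge {k : ℕ} (i : Fin k → ℕ) : EA := (List.ofFn fun j => eps (i j)).prod

/-- `D` is the Schubert derivation on `⋀M`: `D₀ = id`, the generalized Leibniz rule
holds, and `D_i (ε^j) = ε^{i+j}` for `j ≥ 1`. -/
def IsSch (D : ℕ → Module.End ℤ EA) : Prop :=
  (∀ α, D 0 α = α) ∧ (∀ i, 1 ≤ i → D i (1 : EA) = 0) ∧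
  (∀ i (α β : EA), D i (α * β) = ∑ p ∈ Finset.HasAntidiagonal.antidiagonal i, D p.1 α * D p.2 β) ∧
  (∀ i j, 1 ≤ j → D i (eps j) = eps (i + j))

/-!
Peel off the last factor: by the Leibniz rule and induction on `k`,
`D_h(ε^i ∧ ⋯ ∧ ε^{i+k}) = ∑_{a+b=h} ε^i ∧ ⋯ ∧ ε^{i+k-2} ∧ ε^{i+k-1+a} ∧ ε^{i+k+b}`.
The term `a = 0` is the claimed one, and the terms with `a ≥ 1` cancel in pairs
`(a, b) ↔ (b + 1, a - 1)` by anticommutativity, the fixed points being squares `ε^j ∧ ε^j = 0`.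
-/

open Finset

namespace ExteriorAlgebra

variable {R M : Type*} [CommRing R] [AddCommGroup M] [Module R M]

theorem sum_antidiagonal_ι_mul_ι (v : ℕ → M) (n : ℕ) :
    ∑ p ∈ antidiagonal n, ι R (v p.1) * ι R (v p.2) = 0 := by
  refine sum_involution (fun p _ => p.swap) (fun p _ => ι_add_mul_swap _ _) ?_
    (fun p _ => by simpa [add_comm] using mem_antidiagonal.mp ‹_›) (fun p _ => p.swap_swap)
  rintro ⟨a, b⟩ _ hne hswap
  obtain rfl : b = a := congrArg Prod.fst hswap
  exact absurd (ι_sq_zero _) hne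

theorem sum_antidiagonal_ι_mul_ι_succ (v : ℕ → M) (n : ℕ) :
    ∑ p ∈ antidiagonal n, ι R (v p.1) * ι R (v (p.2 + 1)) = ι R (v 0) * ι R (v (n + 1)) := by
  cases n with
  | zero => simp
  | succ n =>
    rw [Nat.sum_antidiagonal_succ, sum_antidiagonal_ι_mul_ι (fun a => v (a + 1)), add_zero]

end ExteriorAlgebra

lemma wedge_succ {k : ℕ} (f : Fin (k + 1) → ℕ) :
    wedge f = wedge (fun j : Fin k => f j.castSucc) * eps (f (Fin.last k)) := by
  rw [wedge, List.ofFn_succ', List.prod_concat]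
  rfl

lemma sum_antidiagonal_eps_mul_eps_succ (n m : ℕ) :
    ∑ p ∈ antidiagonal m, eps (n + p.1) * eps (n + (p.2 + 1)) = eps n * eps (n + (m + 1)) :=
  ExteriorAlgebra.sum_antidiagonal_ι_mul_ι_succ (fun a => ee (n + a)) m

section

variable {D : ℕ → Module.End ℤ EA}
  (hLeibniz : ∀ i (α β : EA), D i (α * β) = ∑ p ∈ antidiagonal i, D p.1 α * D p.2 β)
  (hShift : ∀ i j, 1 ≤ j → D i (eps j) = eps (i + j))
include hLeibniz hShift

lemma apply_wedge_consecutive {i : ℕ} (hi : 1 ≤ i) (k h : ℕ) :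
    D h (wedge (fun j : Fin (k + 1) => i + j)) = wedge (fun j : Fin k => i + j) * eps (i + k + h) := by
  induction k generalizing h with
  | zero => simp [wedge, hShift h i hi, add_comm]
  | succ k ih =>
    rw [wedge_succ, hLeibniz]
    simp only [Fin.val_castSucc, Fin.val_last, ih, hShift _ _ (by omega : 1 ≤ i + (k + 1))]
    rw [wedge_succ]
    simp only [Fin.val_castSucc, Fin.val_last, mul_assoc, ← mul_sum]
    congr 1
    convert sum_antidiagonal_eps_mul_eps_succ (i + k) h using 3
    · congr 1
      omega
    · omega

end

/-- `D_h(ε^i ∧ ε^{i+1} ∧ ⋯ ∧ ε^{i+k-1}) = ε^i ∧ ε^{i+1} ∧ ⋯ ∧ ε^{i+k-2} ∧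
ε^{i+k-1+h}` (only the last index is raised, by `h`). -/
theorem schubert_derivative_of_consecutive_wedge
    (D : ℕ → Module.End ℤ EA) (hD : IsSch D)
    (k : ℕ) (hk : 1 ≤ k) (i : ℕ) (hi : 1 ≤ i) (h : ℕ) :
    D h (wedge (fun j : Fin k => i + (j : ℕ))) =
      wedge (fun j : Fin k => if (j : ℕ) = k - 1 then i + (j : ℕ) + h else i + (j : ℕ)) := by
  obtain ⟨k, rfl⟩ : ∃ k', k = k' + 1 := ⟨k - 1, by omega⟩
  rw [apply_wedge_consecutive hD.2.2.1 hD.2.2.2 hi, wedge_succ]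
  simp only [Fin.val_castSucc, Fin.val_last, add_tsub_cancel_right, if_true]
  congr 2
  funext j
  rw [if_neg j.isLt.ne]

end
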